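/- arXiv:2410.22222 — 3 statements merged into one kernel-verified Lean document; each statement's English description precedes it below -/
import Mathlib

section
/- Let k be a field, G a group, c a conjugacy class, and consider the Koszul-type complex K(M): ⋯ → k{c}^{⊗n} ⊗ M → ⋯ → k{c} ⊗ M → M with differential d(g₁⊗⋯⊗gₙ⊗m) = Σᵢ (-1)ⁱ g₁⊗⋯⊗ĝᵢ⊗⋯⊗gₙ⊗ (gₙ⁻¹⋯g_{i+1}⁻¹gᵢg_{i+1}⋯gₙ)·m. Then d² = 0. -/
/-- The differential of the Koszul-type complex `K(M)` of Ellenberg–Venkatesh–Westerland: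
on `k{c}^{⊗(n+1)} ⊗ M` (modelled as finitely supported functions from tuples in `c` to
`M`) it is `d(g₁⊗⋯⊗gₙ⊗m) = Σᵢ (±1) g₁⊗⋯⊗ĝᵢ⊗⋯⊗gₙ⊗(gₙ⁻¹⋯g_{i+1}⁻¹gᵢg_{i+1}⋯gₙ)·m`,
where `ρ x` is the action of `[x]` on `M`. -/
noncomputable def koszulD (k : Type*) [Field k] (G : Type*) [Group G] (c : Set G)
    (M : Type*) [AddCommGroup M] [Module k M] (ρ : G → Module.End k M) (n : ℕ) :
    ((Fin (n + 1) → c) →₀ M) →ₗ[k] ((Fin n → c) →₀ M) :=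
  Finsupp.lsum k fun v =>
    ∑ i : Fin (n + 1),
      ((-1 : k) ^ ((i : ℕ) + 1)) •
        (Finsupp.lsingle (fun j => v (i.succAbove j))).comp
          (ρ (((List.ofFn fun j => (v j : G)).drop ((i : ℕ) + 1)).prod⁻¹ * (v i : G) *
              ((List.ofFn fun j => (v j : G)).drop ((i : ℕ) + 1)).prod))

/-!
Write `d = -∑ᵢ (-1)ⁱ ∂ᵢ`, where the face `∂ᵢ` deletes `gᵢ` and lets its conjugate by the product of
the later entries act on `m`. The faces satisfy the semi-simplicial identities
`∂ⱼ ∂ᵢ = ∂ᵢ ∂ⱼ₊₁` for `i ≤ j`. On the tuple this is the usual identity for deleting two entries; on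
`M` it is the Hurwitz relation `[x][y] = [y][y⁻¹xy]`, because deleting `gⱼ₊₁` replaces the
conjugate `x'` of `gᵢ` by `y x' y⁻¹`, where `y` is the conjugate of `gⱼ₊₁`. As for any
semi-simplicial object, the alternating sum of the faces then squares to zero: the terms of `d ∘ d`
cancel in pairs.
-/

namespace List

theorem ofFn_succAbove {α : Type*} {n : ℕ} (f : Fin (n + 1) → α) (p : Fin (n + 1)) :
    ofFn (fun j => f (p.succAbove j)) = (ofFn f).eraseIdx p := by
  induction n with
  | zero => simp [Fin.fin_one_eq_zero p]
  | succ n ih =>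
    cases p using Fin.cases with
    | zero => simp [ofFn_succ]
    | succ p =>
      rw [ofFn_succ, ofFn_succ, Fin.val_succ, eraseIdx_cons_succ]
      simp only [Fin.succ_succAbove_zero, Fin.succ_succAbove_succ]
      rw [ih (fun j => f j.succ)]

theorem drop_eraseIdx_of_lt {α : Type*} (L : List α) {i t : ℕ} (h : i < t) :
    (L.eraseIdx i).drop t = L.drop (t + 1) := by
  induction L generalizing i t with
  | nil => simp
  | cons a l ih =>
    obtain ⟨t, rfl⟩ : ∃ t', t = t' + 1 := ⟨t - 1, by omega⟩
    cases i with
    | zero => simp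
    | succ i => simpa using ih (i := i) (t := t) (by omega)

theorem prod_drop_eq_prod_drop_eraseIdx_mul {G : Type*} [Group G] (L : List G) {i q : ℕ}
    (h : i ≤ q) (hq : q < L.length) :
    (L.drop i).prod = ((L.eraseIdx q).drop i).prod *
      ((L.drop (q + 1)).prod⁻¹ * L[q] * (L.drop (q + 1)).prod) := by
  induction L generalizing i q with
  | nil => simp at hq
  | cons a l ih =>
    cases q with
    | zero =>
      obtain rfl : i = 0 := by omega
      simp [mul_assoc]
    | succ q =>
      cases i with
      | zero =>
        have := ih (i := 0) (q := q) (by omega) (by simpa using hq)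
        simp only [drop_zero] at this
        simp [this, mul_assoc]
      | succ i => simpa using ih (i := i) (q := q) (by omega) (by simpa using hq)

end List

section

variable {G : Type*} [Group G]

def tailConj {n : ℕ} (v : Fin n → G) (i : Fin n) : G :=
  ((List.ofFn v).drop (i + 1)).prod⁻¹ * v i * ((List.ofFn v).drop (i + 1)).prod

theorem tailConj_succAbove_of_le {n : ℕ} (v : Fin (n + 2) → G) {p : Fin (n + 2)}
    {j : Fin (n + 1)} (h : p ≤ j.castSucc) :
    tailConj (fun l => v (p.succAbove l)) j = tailConj v j.succ := by
  have hdrop : (List.ofFn fun l => v (p.succAbove l)).drop (j + 1) =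
      (List.ofFn v).drop (j.succ + 1) := by
    rw [List.ofFn_succAbove, List.drop_eraseIdx_of_lt _ (i := p) (t := j + 1)
      (Nat.lt_succ_of_le (Fin.le_def.mp h))]
    rfl
  simp only [tailConj, hdrop, Fin.succAbove_of_le_castSucc _ _ h]

theorem tailConj_castSucc_of_lt {n : ℕ} (v : Fin (n + 2) → G) {i : Fin (n + 1)}
    {q : Fin (n + 2)} (h : i.castSucc < q) :
    tailConj v i.castSucc =
      (tailConj v q)⁻¹ * tailConj (fun l => v (q.succAbove l)) i * tailConj v q := by
  have hsplit := (List.ofFn v).prod_drop_eq_prod_drop_eraseIdx_mul (i := i + 1) (q := q)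
    (Nat.succ_le_of_lt (Fin.lt_def.mp h)) (by rw [List.length_ofFn]; exact q.isLt)
  rw [List.getElem_ofFn] at hsplit
  simp only [tailConj, List.ofFn_succAbove, Fin.val_castSucc, Fin.succAbove_of_castSucc_lt _ _ h,
    hsplit]
  group

end

namespace Fin

theorem succAbove_succAbove_of_le {n : ℕ} {i j : Fin (n + 1)} (h : i ≤ j) (l : Fin n) :
    i.castSucc.succAbove (j.succAbove l) = j.succ.succAbove (i.succAbove l) := by
  rcases i with ⟨i, _⟩
  rcases j with ⟨j, _⟩
  rcases l with ⟨l, _⟩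
  simp only [le_def] at h
  simp only [succAbove, lt_def]
  split_ifs <;> simp_all <;> omega

def facePairing {n : ℕ} (p : Fin (n + 2) × Fin (n + 1)) : Fin (n + 2) × Fin (n + 1) :=
  if h : p.1 ≤ p.2.castSucc then
    (p.2.succ, p.1.castPred (ne_last_of_lt (h.trans_lt (castSucc_lt_last _))))
  else
    (p.2.castSucc, p.1.pred (ne_zero_of_lt (not_le.mp h)))

theorem facePairing_castSucc {n : ℕ} {i j : Fin (n + 1)} (h : i ≤ j) :
    facePairing (i.castSucc, j) = (j.succ, i) := by
  simp [facePairing, h]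

theorem facePairing_succ {n : ℕ} {i j : Fin (n + 1)} (h : i ≤ j) :
    facePairing (j.succ, i) = (i.castSucc, j) := by
  simp [facePairing, not_le.mpr (castSucc_lt_succ_iff.mpr h)]

theorem eq_castSucc_pair_or_eq_succ_pair {n : ℕ} (p : Fin (n + 2) × Fin (n + 1)) :
    (∃ i j, i ≤ j ∧ p = (castSucc i, j)) ∨ ∃ i j, i ≤ j ∧ p = (succ j, i) := by
  obtain ⟨x, y⟩ := p
  by_cases h : x ≤ y.castSucc
  · exact .inl ⟨x.castPred (ne_last_of_lt (h.trans_lt (castSucc_lt_last _))), y,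
      (castPred_le_iff _).mpr h, by simp⟩
  · refine .inr ⟨y, x.pred (ne_zero_of_lt (not_le.mp h)), ?_, by simp⟩
    simpa [le_pred_iff, ← castSucc_lt_iff_succ_le] using h

theorem facePairing_facePairing {n : ℕ} (p : Fin (n + 2) × Fin (n + 1)) :
    facePairing (facePairing p) = p := by
  rcases eq_castSucc_pair_or_eq_succ_pair p with ⟨i, j, h, rfl⟩ | ⟨i, j, h, rfl⟩
  · rw [facePairing_castSucc h, facePairing_succ h]
  · rw [facePairing_succ h, facePairing_castSucc h]

theorem facePairing_ne {n : ℕ} (p : Fin (n + 2) × Fin (n + 1)) : facePairing p ≠ p := by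
  rcases eq_castSucc_pair_or_eq_succ_pair p with ⟨i, j, h, rfl⟩ | ⟨i, j, h, rfl⟩
  · rw [facePairing_castSucc h]
    exact fun he => (castSucc_lt_succ_iff.mpr h).ne' (Prod.ext_iff.mp he).1
  · rw [facePairing_succ h]
    exact fun he => (castSucc_lt_succ_iff.mpr h).ne (Prod.ext_iff.mp he).1

theorem sum_sum_neg_one_pow_smul_eq_zero {R A : Type*} [Ring R] [AddCommGroup A] [Module R A]
    {n : ℕ} (F : Fin (n + 2) → Fin (n + 1) → A)
    (hF : ∀ i j : Fin (n + 1), i ≤ j → F i.castSucc j = F j.succ i) :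
    ∑ x : Fin (n + 2), ∑ y : Fin (n + 1), (-1 : R) ^ ((x : ℕ) + y) • F x y = 0 := by
  have hpair : ∀ i j : Fin (n + 1), i ≤ j →
      (-1 : R) ^ ((i.castSucc : ℕ) + j) • F i.castSucc j +
        (-1 : R) ^ ((j.succ : ℕ) + i) • F j.succ i = 0 := by
    intro i j h
    rw [hF i j h, ← add_smul, val_castSucc, val_succ, add_right_comm, pow_succ, add_comm (j : ℕ)]
    simp
  rw [← Fintype.sum_prod_type']
  refine Finset.sum_ninvolution facePairing (fun p => ?_) (fun p _ => facePairing_ne p)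
    (fun _ => Finset.mem_univ _) facePairing_facePairing
  rcases eq_castSucc_pair_or_eq_succ_pair p with ⟨i, j, h, rfl⟩ | ⟨i, j, h, rfl⟩
  · rw [facePairing_castSucc h]
    exact hpair i j h
  · rw [facePairing_succ h, add_comm]
    exact hpair i j h

end Fin

theorem LinearMap.sum_neg_one_pow_smul_comp_eq_zero {R M N P : Type*} [CommRing R]
    [AddCommGroup M] [AddCommGroup N] [AddCommGroup P] [Module R M] [Module R N] [Module R P]
    {n : ℕ} (d₁ : Fin (n + 1) → N →ₗ[R] P) (d₂ : Fin (n + 2) → M →ₗ[R] N)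
    (h : ∀ i j : Fin (n + 1), i ≤ j → (d₁ j).comp (d₂ i.castSucc) = (d₁ i).comp (d₂ j.succ)) :
    (∑ i : Fin (n + 1), (-1 : R) ^ (i : ℕ) • d₁ i).comp
      (∑ i : Fin (n + 2), (-1 : R) ^ (i : ℕ) • d₂ i) = 0 := by
  ext m
  simp only [LinearMap.comp_apply, LinearMap.sum_apply, LinearMap.smul_apply,
    map_sum, map_smul, Finset.smul_sum, smul_smul, ← pow_add, LinearMap.zero_apply]
  exact Fin.sum_sum_neg_one_pow_smul_eq_zero (R := R) (fun x y => d₁ y (d₂ x m))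
    fun i j hij => LinearMap.congr_fun (h i j hij) m

section

variable {G : Type*} [Group G] {c : Set G}

noncomputable def koszulFace {k M : Type*} [CommSemiring k] [AddCommMonoid M] [Module k M]
    (ρ : G → Module.End k M) {n : ℕ} (i : Fin (n + 1)) :
    ((Fin (n + 1) → c) →₀ M) →ₗ[k] ((Fin n → c) →₀ M) :=
  Finsupp.lsum k fun v =>
    (Finsupp.lsingle (fun j => v (i.succAbove j))).comp (ρ (tailConj (fun j => (v j : G)) i))

theorem koszulD_eq_sum {k M : Type*} [Field k] [AddCommGroup M] [Module k M]
    (ρ : G → Module.End k M) (n : ℕ) :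
    koszulD k G c M ρ n = -∑ i : Fin (n + 1), (-1 : k) ^ (i : ℕ) • koszulFace ρ i := by
  rw [← neg_one_smul k (∑ i, _), Finset.smul_sum]
  simp only [smul_smul, ← pow_succ', koszulFace, ← map_smul, ← map_sum]
  unfold koszulD
  congr 1
  funext v
  rw [Finset.sum_apply]
  rfl

theorem koszulFace_comp_koszulFace {k M : Type*} [CommSemiring k] [AddCommMonoid M] [Module k M]
    (ρ : G → Module.End k M) (hρ : ∀ x y : G, ρ x * ρ y = ρ y * ρ (y⁻¹ * x * y))
    {n : ℕ} {i j : Fin (n + 1)} (h : i ≤ j) :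
    (koszulFace ρ j).comp (koszulFace (c := c) ρ i.castSucc) =
      (koszulFace ρ i).comp (koszulFace ρ j.succ) := by
  refine Finsupp.lhom_ext fun v m => ?_
  simp only [koszulFace, LinearMap.comp_apply, Finsupp.lsum_single, Finsupp.lsingle_apply]
  congr 1
  · funext l
    rw [Fin.succAbove_succAbove_of_le h]
  · rw [tailConj_succAbove_of_le (fun l => (v l : G)) (Fin.castSucc_le_castSucc_iff.mpr h),
      tailConj_castSucc_of_lt (fun l => (v l : G)) (q := j.succ) (Fin.castSucc_lt_succ_iff.mpr h)]
    exact (LinearMap.congr_fun (hρ _ _) m).symm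

end

theorem stmt11_general (k : Type*) [Field k] (G : Type*) [Group G] (c : Set G)
    (M : Type*) [AddCommGroup M] [Module k M] (ρ : G → Module.End k M)
    (hρ : ∀ x y : G, ρ x * ρ y = ρ y * ρ (y⁻¹ * x * y)) :
    ∀ n : ℕ, (koszulD k G c M ρ n).comp (koszulD k G c M ρ (n + 1)) = 0 := by
  intro n
  rw [koszulD_eq_sum, koszulD_eq_sum, LinearMap.neg_comp, LinearMap.comp_neg, neg_neg]
  exact LinearMap.sum_neg_one_pow_smul_comp_eq_zero _ _ fun i j h =>
    koszulFace_comp_koszulFace ρ hρ h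

/-- For any module `M` over the ring of components (i.e. any `k`-module with operators
`ρ x` for `x ∈ G` satisfying the Hurwitz relation `[x][y] = [y][y⁻¹xy]`), the
differential of the complex `K(M)` squares to zero. -/
theorem stmt11 (k : Type*) [Field k] (G : Type*) [Group G] (c : Set G)
    (hc : ∀ g ∈ c, ∀ x : G, x⁻¹ * g * x ∈ c)
    (M : Type*) [AddCommGroup M] [Module k M] (ρ : G → Module.End k M)
    (hρ : ∀ x y : G, ρ x * ρ y = ρ y * ρ (y⁻¹ * x * y)) :
    ∀ n : ℕ, (koszulD k G c M ρ n).comp (koszulD k G c M ρ (n + 1)) = 0 :=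
  stmt11_general k G c M ρ hρ
end

section
/- Fix g ∈ c and let M = k[g, g⁻¹] be the graded module with Mₙ = k for all n ∈ ℤ, where [g] acts by degree shift and [h] acts by 0 for h ≠ g. Then the complex K(M) with terms k{c}^{⊗n} ⊗ M and differential d(g₁⊗⋯⊗gₙ⊗m) = Σᵢ (-1)ⁱ g₁⊗⋯⊗ĝᵢ⊗⋯⊗gₙ⊗[gₙ⁻¹⋯g_{i+1}⁻¹gᵢg_{i+1}⋯gₙ]·m is exact. -/
/-- The action of the component ring on the graded module `k[g, g⁻¹]` (a copy of `k` in
every integer degree): `[g]` acts by the degree shift, and `[h]` acts by `0` for `h ≠ g`. -/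
noncomputable def shiftAction (k : Type*) [Field k] (G : Type*) [Group G]
    [DecidableEq G] (g : G) : G → Module.End k (ℤ →₀ k) :=
  fun h => if h = g then (Finsupp.lmapDomain k k (fun z : ℤ => z + 1)) else 0

namespace Stmt12Aux

lemma val_sa {m : ℕ} (p : Fin (m+1)) (j : Fin m) :
    (p.succAbove j : ℕ) = if (j:ℕ) < p then (j:ℕ) else (j:ℕ)+1 := by
  rw [Fin.succAbove]
  split_ifs with h1 h2 h3
  · rfl
  · exact absurd (by exact_mod_cast h1) h2
  · exact absurd (by exact_mod_cast h3) h1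
  · rfl

variable {G : Type*} [Group G]

/-- product of entries of `w` with index `≥ t`. -/
def tailP {m : ℕ} (w : Fin m → G) (t : ℕ) : G := ((List.ofFn w).drop t).prod

lemma tailP_ge {m : ℕ} (w : Fin m → G) {t : ℕ} (h : m ≤ t) : tailP w t = 1 := by
  unfold tailP
  rw [List.drop_eq_nil_of_le (by simpa using h), List.prod_nil]

lemma tailP_cons {m : ℕ} (w : Fin m → G) {t : ℕ} (h : t < m) :
    tailP w t = w ⟨t, h⟩ * tailP w (t+1) := by
  unfold tailP
  rw [List.drop_eq_getElem_cons (by simpa using h), List.prod_cons]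
  congr 1
  simp [List.getElem_ofFn]

lemma ofFn_eraseIdx {m : ℕ} (w : Fin (m+1) → G) (p : Fin (m+1)) :
    List.ofFn (fun j => w (p.succAbove j)) = (List.ofFn w).eraseIdx p := by
  rw [List.eraseIdx_eq_take_drop_succ]
  apply List.ext_getElem
  · simp
    omega
  · intro s h1 h2
    rw [List.getElem_append]
    simp only [List.getElem_ofFn, List.length_take, List.length_ofFn]
    simp only [List.length_ofFn, List.length_take, List.length_append, List.length_drop] at h1 h2 ⊢
    split_ifs with hs
    · rw [List.getElem_take, List.getElem_ofFn]
      congr 1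
      apply Fin.ext
      rw [val_sa]
      simp only [Fin.val_mk, Nat.min_def] at *
      split_ifs <;> omega
    · rw [List.getElem_drop, List.getElem_ofFn]
      congr 1
      apply Fin.ext
      rw [val_sa]
      simp only [Fin.val_mk, Nat.min_def] at *
      split_ifs <;> omega

lemma tailP_erase_ge {m : ℕ} (w : Fin (m+1) → G) (p : Fin (m+1)) {t : ℕ} (h : (p:ℕ) < t) :
    tailP (fun j => w (p.succAbove j)) t = tailP w (t+1) := by
  unfold tailP
  rw [ofFn_eraseIdx, List.eraseIdx_eq_take_drop_succ, List.drop_append,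
    List.drop_eq_nil_of_le (by simp only [List.length_take, List.length_ofFn, Nat.min_def]; split_ifs <;> omega), List.drop_drop, List.nil_append]
  have hplt : (p:ℕ) < m + 1 := p.isLt
  congr 2
  simp only [List.length_take, List.length_ofFn, Nat.min_def]
  split_ifs <;> omega

lemma tailP_erase_lt {m : ℕ} (w : Fin (m+1) → G) (b : Fin (m+1)) {t : ℕ} (h : t ≤ b) :
    tailP (fun j => w (b.succAbove j)) t = tailP w t * (tailP w b)⁻¹ * tailP w (b+1) := by
  unfold tailP
  rw [ofFn_eraseIdx, List.eraseIdx_eq_take_drop_succ, List.drop_append,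
    List.prod_append, List.drop_take]
  have hlen : ((List.ofFn w).take (b:ℕ)).length = (b:ℕ) := by
    simp only [List.length_take, List.length_ofFn, Nat.min_def]
    split_ifs <;> omega
  rw [hlen, Nat.sub_eq_zero_of_le h, List.drop_zero]
  have key : (((List.ofFn w).drop t).take ((b:ℕ)-t)).prod * ((List.ofFn w).drop (b:ℕ)).prod
      = ((List.ofFn w).drop t).prod := by
    rw [← List.prod_append]
    congr 1
    conv_rhs => rw [← List.take_append_drop ((b:ℕ)-t) ((List.ofFn w).drop t)]
    rw [List.drop_drop]
    congr 2
    omega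
  have := eq_mul_inv_of_mul_eq key
  rw [this]

lemma conj_eq_iff_left {G : Type*} [Group G] (u x : G) : u⁻¹ * x * u = u ↔ x = u := by
  constructor
  · intro h
    have h1 : u⁻¹ * x = 1 := mul_right_cancel (b := u) (by rw [h, one_mul])
    exact (inv_mul_eq_one.mp h1).symm
  · rintro rfl; group

lemma conj_eq_iff_right {G : Type*} [Group G] (u x : G) : u * x * u⁻¹ = u ↔ x = u := by
  constructor
  · intro h
    have h1 : u * x * u⁻¹ * u = u * u := by rw [h]
    have h2 : u * x * u⁻¹ * u = u * x := by group
    exact mul_left_cancel (h2.symm.trans h1)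
  · rintro rfl; group

variable (k : Type*) [Field k] {G : Type*} [Group G] [DecidableEq G] (g : G)

noncomputable def Sinv : (ℤ →₀ k) →ₗ[k] (ℤ →₀ k) :=
  Finsupp.lmapDomain k k (fun z : ℤ => z - 1)

lemma Sg_Sinv (x : ℤ →₀ k) : shiftAction k G g g (Sinv k x) = x := by
  rw [shiftAction, if_pos rfl, Sinv, ← LinearMap.comp_apply, ← Finsupp.lmapDomain_comp]
  have : ((fun z : ℤ => z + 1) ∘ (fun z : ℤ => z - 1)) = id := by funext z; simp
  rw [this, Finsupp.lmapDomain_id, LinearMap.id_apply]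

lemma rho_conj (x : G) : shiftAction k G g (g⁻¹ * x * g) = shiftAction k G g x := by
  unfold shiftAction
  by_cases hx : x = g
  · rw [if_pos ((conj_eq_iff_left g x).mpr hx), if_pos hx]
  · rw [if_neg (fun hco => hx ((conj_eq_iff_left g x).mp hco)), if_neg hx]

lemma rho_key (x y : G) :
    (shiftAction k G g (y * x * y⁻¹)) * (shiftAction k G g y)
      = (shiftAction k G g y) * (shiftAction k G g x) := by
  unfold shiftAction
  by_cases hy : y = g
  · rw [hy]
    by_cases hx : x = g
    · rw [if_pos ((conj_eq_iff_right g x).mpr hx), if_pos hx, if_pos rfl]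
    · rw [if_neg (fun hco => hx ((conj_eq_iff_right g x).mp hco)), if_neg hx,
        if_pos rfl, zero_mul, mul_zero]
  · rw [if_neg hy, mul_zero, zero_mul]

lemma rho_Sinv (x : G) :
    (shiftAction k G g x) ∘ₗ (Sinv k) = (Sinv k) ∘ₗ (shiftAction k G g x) := by
  unfold shiftAction Sinv
  split_ifs
  · rw [← Finsupp.lmapDomain_comp, ← Finsupp.lmapDomain_comp]
    congr 1
    funext z
    simp [Function.comp]
  · simp


section
variable {M : Type*} [AddCommGroup M] [Module k M]

lemma koszulD_single (c : Set G) (ρ : G → Module.End k M) (n : ℕ)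
    (v : Fin (n+1) → c) (x : M) :
    koszulD k G c M ρ n (Finsupp.single v x) =
      ∑ i : Fin (n+1), ((-1:k)^((i:ℕ)+1)) •
        Finsupp.single (fun j => v (i.succAbove j))
          (ρ ((tailP (fun j => (v j : G)) ((i:ℕ)+1))⁻¹ * (v i : G) *
              tailP (fun j => (v j : G)) ((i:ℕ)+1)) x) := by
  unfold koszulD tailP
  rw [Finsupp.lsum_single, LinearMap.sum_apply]
  refine Finset.sum_congr rfl fun i _ => ?_
  rw [LinearMap.smul_apply, LinearMap.comp_apply, Finsupp.lsingle_apply]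

end

lemma sa_castSucc {m : ℕ} (i : Fin (m+1)) (j : Fin m) :
    (Fin.castSucc i).succAbove (Fin.castSucc j) = Fin.castSucc (i.succAbove j) := by
  apply Fin.ext
  rw [val_sa]
  simp only [Fin.coe_castSucc]
  rw [val_sa]

lemma sa_castSucc_last {m : ℕ} (i : Fin (m+1)) :
    (Fin.castSucc i).succAbove (Fin.last m) = Fin.last (m+1) := by
  apply Fin.ext
  have hi := i.isLt
  rw [val_sa]
  simp only [Fin.coe_castSucc, Fin.val_last]
  rw [if_neg (by omega)]

lemma sa_last {m : ℕ} (j : Fin (m+1)) :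
    (Fin.last (m+1)).succAbove j = Fin.castSucc j := by
  apply Fin.ext
  rw [val_sa]
  simp only [Fin.val_last, Fin.coe_castSucc]
  rw [if_pos j.isLt]

lemma snoc_sa {α : Type*} {m : ℕ} (v : Fin (m+1) → α) (a : α) (i : Fin (m+1)) :
    (fun j => (Fin.snoc v a : Fin (m+2) → α) ((Fin.castSucc i).succAbove j)) = (Fin.snoc (fun j => v (i.succAbove j)) a : Fin (m+1) → α) := by
  funext j
  refine Fin.lastCases ?_ (fun j' => ?_) j
  · rw [sa_castSucc_last, Fin.snoc_last, Fin.snoc_last]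
  · rw [sa_castSucc, Fin.snoc_castSucc, Fin.snoc_castSucc]

lemma snoc_sa_last {α : Type*} {m : ℕ} (v : Fin (m+1) → α) (a : α) :
    (fun j => (Fin.snoc v a : Fin (m+2) → α) ((Fin.last (m+1)).succAbove j)) = v := by
  funext j
  rw [sa_last, Fin.snoc_castSucc]

lemma ofFn_snoc {α : Type*} {m : ℕ} (w : Fin m → α) (a : α) :
    List.ofFn (Fin.snoc w a) = List.ofFn w ++ [a] := by
  rw [List.ofFn_succ']
  simp [Fin.snoc_castSucc, Fin.snoc_last]

lemma tailP_snoc {m : ℕ} (w : Fin m → G) (a : G) {t : ℕ} (h : t ≤ m) :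
    tailP (Fin.snoc w a) t = tailP w t * a := by
  unfold tailP
  rw [ofFn_snoc, List.drop_append,
    show t - (List.ofFn w).length = 0 by simp; omega, List.drop_zero, List.prod_append,
    List.prod_singleton]

section Homotopy

variable (c : Set G) (hg : g ∈ c)

noncomputable def homot (n : ℕ) :
    ((Fin n → c) →₀ (ℤ →₀ k)) →ₗ[k] ((Fin (n+1) → c) →₀ (ℤ →₀ k)) :=
  ((-1:k)^(n+1)) • (Finsupp.lsum k fun v => (Finsupp.lsingle (Fin.snoc v (⟨g, hg⟩ : c) : Fin (n+1) → c)).comp (Sinv k))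

lemma homot_single (n : ℕ) (v : Fin n → c) (x : ℤ →₀ k) :
    homot k g c hg n (Finsupp.single v x)
      = ((-1:k)^(n+1)) • Finsupp.single (Fin.snoc v (⟨g, hg⟩ : c) : Fin (n+1) → c) (Sinv k x) := by
  unfold homot
  rw [LinearMap.smul_apply, Finsupp.lsum_single, LinearMap.comp_apply, Finsupp.lsingle_apply]

lemma coe_snoc {n : ℕ} (v : Fin n → c) :
    (fun j => ((Fin.snoc v (⟨g, hg⟩ : c) : Fin (n+1) → c) j : G)) = Fin.snoc (fun j => (v j : G)) g := by
  funext j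
  refine Fin.lastCases ?_ (fun j' => ?_) j
  · rw [Fin.snoc_last, Fin.snoc_last]
  · rw [Fin.snoc_castSucc, Fin.snoc_castSucc]

lemma rho_Sinv_apply (x : G) (y : ℤ →₀ k) :
    shiftAction k G g x (Sinv k y) = Sinv k (shiftAction k G g x y) := by
  have := LinearMap.congr_fun (rho_Sinv k g x) y
  rwa [LinearMap.comp_apply, LinearMap.comp_apply] at this

lemma dh_single (n : ℕ) (v : Fin (n+1) → c) (x : ℤ →₀ k) :
    koszulD k G c (ℤ →₀ k) (shiftAction k G g) (n+1) (homot k g c hg (n+1) (Finsupp.single v x)) =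
      Finsupp.single v x +
        ∑ i : Fin (n+1), ((-1:k)^(n+2) * (-1:k)^((i:ℕ)+1)) •
          Finsupp.single (Fin.snoc (fun j => v (i.succAbove j)) (⟨g, hg⟩ : c) : Fin (n+1) → c)
            (Sinv k (shiftAction k G g
              ((tailP (fun j => (v j : G)) ((i:ℕ)+1))⁻¹ * (v i : G) *
                tailP (fun j => (v j : G)) ((i:ℕ)+1)) x)) := by
  rw [homot_single, map_smul, koszulD_single, Finset.smul_sum, Fin.sum_univ_castSucc]
  conv_rhs => rw [add_comm]
  congr 1
  · refine Finset.sum_congr rfl fun i _ => ?_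
    rw [smul_smul, snoc_sa, coe_snoc g c hg]
    simp only [Fin.snoc_castSucc, Fin.coe_castSucc]
    rw [tailP_snoc _ _ (by omega : (i:ℕ)+1 ≤ n+1)]
    rw [show (tailP (fun j => (v j : G)) ((i:ℕ)+1) * g)⁻¹ * (v i : G) *
          (tailP (fun j => (v j : G)) ((i:ℕ)+1) * g)
        = g⁻¹ * ((tailP (fun j => (v j : G)) ((i:ℕ)+1))⁻¹ * (v i : G) *
            tailP (fun j => (v j : G)) ((i:ℕ)+1)) * g from by group]
    rw [rho_conj, rho_Sinv_apply]
  · rw [smul_smul, snoc_sa_last, coe_snoc g c hg]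
    simp only [Fin.val_last, Fin.snoc_last]
    rw [tailP_ge _ (le_refl (n+2))]
    rw [show (1:G)⁻¹ * g * 1 = g from by group]
    rw [Sg_Sinv]
    rw [show ((-1:k)^(n+1+1) * (-1:k)^(n+1+1)) = 1 from by
      rw [← pow_add]; exact Even.neg_one_pow ⟨n+2, by ring⟩]
    rw [one_smul]

lemma hm0 :
    (koszulD k G c (ℤ →₀ k) (shiftAction k G g) 0) ∘ₗ homot k g c hg 0 = LinearMap.id := by
  apply Finsupp.lhom_ext
  intro v x
  rw [LinearMap.comp_apply, LinearMap.id_apply, homot_single, map_smul, koszulD_single,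
    Fin.sum_univ_one, smul_smul]
  rw [show ((0 : Fin 1) : ℕ) = 0 from rfl]
  rw [tailP_ge _ (le_refl 1)]
  rw [show ((-1:k)^(0+1) * (-1:k)^(0+1)) = 1 from by norm_num]
  rw [one_smul]
  rw [show ((Fin.snoc v (⟨g, hg⟩ : c) : Fin 1 → c) 0 : G) = g from by
    rw [show (0 : Fin 1) = Fin.last 0 from rfl, Fin.snoc_last]]
  rw [show (1:G)⁻¹ * g * 1 = g from by group]
  rw [Sg_Sinv]
  congr 1
  exact funext fun j => j.elim0

lemma hmS (n : ℕ) :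
    (koszulD k G c (ℤ →₀ k) (shiftAction k G g) (n+1)) ∘ₗ homot k g c hg (n+1)
      + (homot k g c hg n) ∘ₗ (koszulD k G c (ℤ →₀ k) (shiftAction k G g) n)
      = LinearMap.id := by
  apply Finsupp.lhom_ext
  intro v x
  rw [LinearMap.add_apply, LinearMap.comp_apply, LinearMap.comp_apply, LinearMap.id_apply,
    dh_single, koszulD_single, map_sum]
  simp only [map_smul, homot_single, smul_smul]
  rw [add_assoc, ← Finset.sum_add_distrib]
  rw [Finset.sum_eq_zero, add_zero]
  intro i _
  rw [← add_smul]
  rw [show ((-1:k)^(n+2) * (-1:k)^((i:ℕ)+1) + (-1:k)^((i:ℕ)+1) * (-1:k)^(n+1)) = 0 from by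
    rw [pow_succ (-1:k) (n+1)]; ring]
  rw [zero_smul]

lemma sa_swap {n : ℕ} (p : Fin (n+2)) (q : Fin (n+1)) (h : (p:ℕ) ≤ q) (j : Fin n) :
    p.succAbove (q.succAbove j) =
      (q.succ).succAbove ((⟨(p:ℕ), by have := q.isLt; omega⟩ : Fin (n+1)).succAbove j) := by
  have hq := q.isLt
  have hj := j.isLt
  apply Fin.ext
  simp only [val_sa, Fin.val_succ, Fin.val_mk]
  split_ifs <;> omega

noncomputable def ddF (n : ℕ) (v : Fin (n+2) → c) (x : ℤ →₀ k)
    (pq : Fin (n+2) × Fin (n+1)) : (Fin n → c) →₀ (ℤ →₀ k) :=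
  ((-1:k)^((pq.1:ℕ)+1) * (-1:k)^((pq.2:ℕ)+1)) •
    Finsupp.single (fun j => v (pq.1.succAbove (pq.2.succAbove j)))
      (shiftAction k G g
        ((tailP (fun j => (v (pq.1.succAbove j) : G)) ((pq.2:ℕ)+1))⁻¹ *
            (v (pq.1.succAbove pq.2) : G) *
          tailP (fun j => (v (pq.1.succAbove j) : G)) ((pq.2:ℕ)+1))
        (shiftAction k G g
          ((tailP (fun j => (v j : G)) ((pq.1:ℕ)+1))⁻¹ * (v pq.1 : G) *
            tailP (fun j => (v j : G)) ((pq.1:ℕ)+1)) x))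

lemma ddF_cancel (n : ℕ) (v : Fin (n+2) → c) (x : ℤ →₀ k)
    (p p' : Fin (n+2)) (q q' : Fin (n+1)) (h : (p:ℕ) ≤ q)
    (hp' : (p':ℕ) = (q:ℕ)+1) (hq' : (q':ℕ) = (p:ℕ)) :
    ddF k g c n v x (p, q) + ddF k g c n v x (p', q') = 0 := by
  have hq := q.isLt
  have h1 : p' = q.succ := Fin.ext (by rw [hp', Fin.val_succ])
  have h2 : q' = ⟨(p:ℕ), lt_of_le_of_lt h hq⟩ := Fin.ext (by rw [hq'])
  subst h1
  subst h2
  unfold ddF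
  dsimp only
  -- abbreviations
  have e1 : tailP (fun j => (v (p.succAbove j) : G)) ((q:ℕ)+1)
      = tailP (fun j => (v j : G)) ((q:ℕ)+2) := by
    have := tailP_erase_ge (fun j => (v j : G)) p (t := (q:ℕ)+1) (by omega)
    exact this
  have e2 : p.succAbove q = q.succ := by
    apply Fin.ext
    rw [val_sa, if_neg (by omega), Fin.val_succ]
  have e3 : tailP (fun j => (v (q.succ.succAbove j) : G)) ((p:ℕ)+1)
      = tailP (fun j => (v j : G)) ((p:ℕ)+1) * (tailP (fun j => (v j : G)) ((q:ℕ)+1))⁻¹ *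
          tailP (fun j => (v j : G)) ((q:ℕ)+2) := by
    have := tailP_erase_lt (fun j => (v j : G)) q.succ
      (t := (p:ℕ)+1) (by rw [Fin.val_succ]; omega)
    rwa [Fin.val_succ] at this
  have e4 : q.succ.succAbove (⟨(p:ℕ), by have := q.isLt; omega⟩ : Fin (n+1)) = p := by
    apply Fin.ext
    rw [val_sa]
    simp only [Fin.val_mk, Fin.val_succ]
    rw [if_pos (by omega)]
  have e5 : (fun j => v (p.succAbove (q.succAbove j)))
      = (fun j => v (q.succ.succAbove
          ((⟨(p:ℕ), by have := q.isLt; omega⟩ : Fin (n+1)).succAbove j))) :=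
    funext fun j => congrArg v (sa_swap p q h j)
  have e6 : tailP (fun j => (v j : G)) ((q:ℕ)+1)
      = (v q.succ : G) * tailP (fun j => (v j : G)) ((q:ℕ)+2) := by
    have := tailP_cons (fun j => (v j : G)) (t := (q:ℕ)+1) (by omega)
    exact this
  rw [e1, e2, e3, e4, ← e5]
  simp only [Fin.val_succ, Fin.val_mk]
  -- value equality via the key relation
  set P1 : G := tailP (fun j => (v j : G)) ((p:ℕ)+1) with hP1
  set Q2 : G := tailP (fun j => (v j : G)) ((q:ℕ)+2) with hQ2
  set X : G := Q2⁻¹ * (v q.succ : G) * Q2 with hX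
  set B : G := P1⁻¹ * (v p : G) * P1 with hB
  have hA2 : (P1 * (tailP (fun j => (v j : G)) ((q:ℕ)+1))⁻¹ * Q2)⁻¹ * (v p : G) *
        (P1 * (tailP (fun j => (v j : G)) ((q:ℕ)+1))⁻¹ * Q2)
      = X * B * X⁻¹ := by
    rw [e6, hX, hB]
    group
  rw [hA2]
  have e7 : shiftAction k G g (X * B * X⁻¹) (shiftAction k G g X x)
      = shiftAction k G g X (shiftAction k G g B x) := by
    have := LinearMap.congr_fun (rho_key k g B X) x
    rwa [Module.End.mul_apply, Module.End.mul_apply] at this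
  rw [e7]
  rw [← add_smul]
  rw [show ((-1:k)^((p:ℕ)+1) * (-1:k)^((q:ℕ)+1)
      + (-1:k)^((q:ℕ)+1+1) * (-1:k)^((p:ℕ)+1)) = 0 from by
    rw [pow_succ (-1:k) ((q:ℕ)+1)]; ring]
  rw [zero_smul]

def ddPhi (n : ℕ) (pq : Fin (n+2) × Fin (n+1)) : Fin (n+2) × Fin (n+1) :=
  if h : (pq.2 : ℕ) < (pq.1 : ℕ) then
    (Fin.castSucc pq.2, ⟨(pq.1 : ℕ) - 1, by have := pq.1.isLt; omega⟩)
  else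
    (pq.2.succ, ⟨(pq.1 : ℕ), by have := pq.2.isLt; omega⟩)

lemma ddPhi_ne (n : ℕ) (pq : Fin (n+2) × Fin (n+1)) : ddPhi n pq ≠ pq := by
  obtain ⟨p, q⟩ := pq
  unfold ddPhi
  dsimp only
  split_ifs with h1
  · intro hEq
    have := congrArg (fun z => ((z.1 : ℕ)) ) hEq
    simp only [Fin.coe_castSucc] at this
    omega
  · intro hEq
    have := congrArg (fun z => ((z.1 : ℕ)) ) hEq
    simp only [Fin.val_succ] at this
    omega

lemma ddPhi_invol (n : ℕ) (pq : Fin (n+2) × Fin (n+1)) : ddPhi n (ddPhi n pq) = pq := by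
  obtain ⟨p, q⟩ := pq
  have hp := p.isLt
  have hq := q.isLt
  by_cases h1 : (q:ℕ) < (p:ℕ)
  · rw [show ddPhi n (p, q) = (Fin.castSucc q, ⟨(p:ℕ)-1, by omega⟩) from by
      unfold ddPhi; dsimp only; rw [dif_pos h1]]
    rw [show ddPhi n (Fin.castSucc q, (⟨(p:ℕ)-1, by omega⟩ : Fin (n+1)))
        = ((⟨(p:ℕ)-1, by omega⟩ : Fin (n+1)).succ,
           ⟨((Fin.castSucc q : Fin (n+2)) : ℕ), by simp only [Fin.coe_castSucc]; omega⟩) from by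
      unfold ddPhi; dsimp only
      rw [dif_neg (by simp only [Fin.coe_castSucc, Fin.val_mk]; omega)]]
    apply Prod.ext <;>
      · apply Fin.ext
        simp only [Fin.val_succ, Fin.val_mk, Fin.coe_castSucc]
        try omega
  · rw [show ddPhi n (p, q) = (q.succ, ⟨(p:ℕ), by omega⟩) from by
      unfold ddPhi; dsimp only; rw [dif_neg h1]]
    rw [show ddPhi n (q.succ, (⟨(p:ℕ), by omega⟩ : Fin (n+1)))
        = (Fin.castSucc (⟨(p:ℕ), by omega⟩ : Fin (n+1)),
           ⟨((q.succ : Fin (n+2)) : ℕ) - 1, by simp only [Fin.val_succ]; omega⟩) from by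
      unfold ddPhi; dsimp only
      rw [dif_pos (by simp only [Fin.val_succ, Fin.val_mk]; omega)]]
    apply Prod.ext <;>
      · apply Fin.ext
        simp only [Fin.val_succ, Fin.val_mk, Fin.coe_castSucc]
        try omega

set_option maxHeartbeats 1000000 in
lemma ddF_add_phi (n : ℕ) (v : Fin (n+2) → c) (x : ℤ →₀ k)
    (pq : Fin (n+2) × Fin (n+1)) :
    ddF k g c n v x pq + ddF k g c n v x (ddPhi n pq) = 0 := by
  obtain ⟨p, q⟩ := pq
  unfold ddPhi
  dsimp only
  split_ifs with h1
  · have hp := p.isLt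
    rw [add_comm]
    refine ddF_cancel k g c n v x _ _ _ _ ?_ ?_ ?_
    · simp only [Fin.coe_castSucc, Fin.val_mk]; omega
    · simp only [Fin.val_mk]; omega
    · simp only [Fin.coe_castSucc]
  · refine ddF_cancel k g c n v x _ _ _ _ ?_ ?_ ?_
    · omega
    · rw [Fin.val_succ]
    · simp only [Fin.val_mk]

lemma dd (n : ℕ) :
    (koszulD k G c (ℤ →₀ k) (shiftAction k G g) n) ∘ₗ
      (koszulD k G c (ℤ →₀ k) (shiftAction k G g) (n+1)) = 0 := by
  apply Finsupp.lhom_ext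
  intro v x
  rw [LinearMap.comp_apply, LinearMap.zero_apply, koszulD_single, map_sum]
  simp only [map_smul, koszulD_single, Finset.smul_sum, smul_smul]
  have h0 : ∑ pq : Fin (n+2) × Fin (n+1), ddF k g c n v x pq = 0 :=
    Finset.sum_ninvolution (ddPhi n) (ddF_add_phi k g c n v x)
      (fun a _ => ddPhi_ne n a) (fun a => Finset.mem_univ _) (ddPhi_invol n)
  refine Eq.trans ?_ h0
  rw [Fintype.sum_prod_type]
  refine Finset.sum_congr rfl fun p _ => Finset.sum_congr rfl fun q _ => ?_
  rfl

end Homotopy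

end Stmt12Aux

/-- For `M = k[g, g⁻¹]`, the complex `K(M)` is exact (its homology vanishes in every
degree, including the bottom one). -/
theorem stmt12 (k : Type*) [Field k] (G : Type*) [Group G] [DecidableEq G]
    (c : Set G) (hc : ∀ x ∈ c, ∀ y : G, y⁻¹ * x * y ∈ c) (g : G) (hg : g ∈ c) :
    (∀ n : ℕ,
        LinearMap.ker (koszulD k G c (ℤ →₀ k) (shiftAction k G g) n) =
          LinearMap.range (koszulD k G c (ℤ →₀ k) (shiftAction k G g) (n + 1))) ∧
    LinearMap.range (koszulD k G c (ℤ →₀ k) (shiftAction k G g) 0) = ⊤ := by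
  constructor
  · intro n
    apply le_antisymm
    · intro y hy
      rw [LinearMap.mem_ker] at hy
      have hid := Stmt12Aux.hmS k g c hg n
      have h2 := LinearMap.congr_fun hid y
      rw [LinearMap.add_apply, LinearMap.comp_apply, LinearMap.comp_apply,
        LinearMap.id_apply, hy, map_zero, add_zero] at h2
      exact ⟨Stmt12Aux.homot k g c hg (n+1) y, h2⟩
    · rintro y ⟨z, rfl⟩
      rw [LinearMap.mem_ker]
      have h3 := LinearMap.congr_fun (Stmt12Aux.dd k g c n) z
      rwa [LinearMap.comp_apply, LinearMap.zero_apply] at h3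
  · rw [LinearMap.range_eq_top]
    intro y
    refine ⟨Stmt12Aux.homot k g c hg 0 y, ?_⟩
    have h4 := LinearMap.congr_fun (Stmt12Aux.hm0 k g c hg) y
    rwa [LinearMap.comp_apply, LinearMap.id_apply] at h4
end

section
/- Let C'_{•,•} be a first-quadrant-type double complex that is exact as a total complex, filtered by subcomplexes D^{-i} such that the associated graded complexes C'_{•,-i} are each exact except in a single (bottom) degree. Let J_{-i} be the kernel of the first differential of C'_{•,-i}, with induced differential. Then J_• is quasi-isomorphic to the total complex of C'_{•,•}; consequently J_• is exact, and each truncated subcomplex D^x_{•,•} has homology concentrated in the single position (0,x). -/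
namespace Stmt16Aux

def tr (M : ℤ → ℤ → Type*) {i i' j j' : ℤ} (hi : i = i') (hj : j = j') (x : M i j) :
    M i' j' := cast (congrArg₂ M hi hj) x

theorem tr_tr {M : ℤ → ℤ → Type*} {i i' i'' j j' j'' : ℤ} (hi : i = i') (hj : j = j')
    (hi' : i' = i'') (hj' : j' = j'') (x : M i j) :
    tr M hi' hj' (tr M hi hj x) = tr M (hi.trans hi') (hj.trans hj') x := by
  subst hi hj hi' hj'; rfl

theorem tr_id {M : ℤ → ℤ → Type*} {i j : ℤ} (hi : i = i) (hj : j = j) (x : M i j) :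
    tr M hi hj x = x := rfl

section
variable {M : ℤ → ℤ → Type*} [∀ i j, AddCommGroup (M i j)]

theorem tr_zero {i i' j j' : ℤ} (hi : i = i') (hj : j = j') :
    tr M hi hj (0 : M i j) = 0 := by subst hi hj; rfl

theorem tr_add {i i' j j' : ℤ} (hi : i = i') (hj : j = j') (x y : M i j) :
    tr M hi hj (x + y) = tr M hi hj x + tr M hi hj y := by subst hi hj; rfl

theorem tr_neg {i i' j j' : ℤ} (hi : i = i') (hj : j = j') (x : M i j) :
    tr M hi hj (-x) = -(tr M hi hj x) := by subst hi hj; rfl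

theorem tr_sub {i i' j j' : ℤ} (hi : i = i') (hj : j = j') (x y : M i j) :
    tr M hi hj (x - y) = tr M hi hj x - tr M hi hj y := by subst hi hj; rfl

theorem tr_eq_zero_iff {i i' j j' : ℤ} (hi : i = i') (hj : j = j') (x : M i j) :
    tr M hi hj x = 0 ↔ x = 0 := by subst hi hj; exact Iff.rfl

variable {R : Type*} [Ring R] [∀ i j, Module R (M i j)]

theorem a_tr (a : ∀ i j, M i j →ₗ[R] M (i + 1) j) {i i' j j' : ℤ}
    (hi : i = i') (hj : j = j') (x : M i j) :
    a i' j' (tr M hi hj x) = tr M (by rw [hi]) hj (a i j x) := by subst hi hj; rfl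

theorem b_tr (b : ∀ i j, M i j →ₗ[R] M i (j + 1)) {i i' j j' : ℤ}
    (hi : i = i') (hj : j = j') (x : M i j) :
    b i' j' (tr M hi hj x) = tr M hi (by rw [hj]) (b i j x) := by subst hi hj; rfl

theorem z_tr {g : ℤ → ℤ} (z : ∀ i, M i (g i)) {i i' : ℤ} (h : i = i') :
    z i' = tr M h (by rw [h]) (z i) := by subst h; rfl

end
end Stmt16Aux

open Stmt16Aux


/-- Abstract homological-algebra statement: let `M i j` be a first-quadrant-type double
complex (vanishing for `i < 0`) with anticommuting differentials `a` (raising `i`) and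
`b` (raising `j`), and let `D` be the resulting total differential on finitely
supported total cochains. Assume the total complex is exact and each column
`(M • j, a)` is exact except at `i = 0`. Let `J j := ker (a 0 j)` with differential
induced by `b`. Then:
* (J computes the total homology, surjectivity) every finitely supported total cycle is
  homologous to one concentrated in the column `i = 0` (where it automatically lies in
  `J` and is a `b`-cycle);
* (injectivity) a `J`-cycle which becomes a total boundary is already a `b`-boundary of
  a `J`-element;
* `J` is exact;
* for each `x`, the truncated subcomplex `D^x` (total cochains supported in columns
  with `j ≥ x`) is exact in every total degree other than `x`, i.e. its homology is
  concentrated in the single position `(0, x)`. -/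
theorem stmt16 (R : Type*) [Ring R] (M : ℤ → ℤ → Type*)
    [∀ i j, AddCommGroup (M i j)] [∀ i j, Module R (M i j)]
    (a : ∀ i j, M i j →ₗ[R] M (i + 1) j)
    (b : ∀ i j, M i j →ₗ[R] M i (j + 1))
    (ha : ∀ i j (x : M i j), a (i + 1) j (a i j x) = 0)
    (hb : ∀ i j (x : M i j), b i (j + 1) (b i j x) = 0)
    (hab : ∀ i j (x : M i j), a i (j + 1) (b i j x) = - b (i + 1) j (a i j x))
    (hquad : ∀ i j, i < 0 → ∀ x : M i j, x = 0)
    (D : ∀ n : ℤ, (∀ i : ℤ, M i (n - i)) → ∀ i : ℤ, M i (n + 1 - i))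
    (hD : ∀ n z (i : ℤ),
      D n z i =
        cast (congrArg (M i) (by ring : n - i + 1 = n + 1 - i)) (b i (n - i) (z i)) +
          cast (congrArg₂ M (by ring : i - 1 + 1 = i) (by ring : n - (i - 1) = n + 1 - i))
            (a (i - 1) (n - (i - 1)) (z (i - 1))))
    (hTot : ∀ (n : ℤ) (z : ∀ i : ℤ, M i (n + 1 - i)), {i | z i ≠ 0}.Finite →
      D (n + 1) z = 0 →
      ∃ w : ∀ i : ℤ, M i (n - i), {i | w i ≠ 0}.Finite ∧ D n w = z)
    (hRows : ∀ i j, 0 ≤ i → ∀ x : M (i + 1) j, a (i + 1) j x = 0 →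
      ∃ y : M i j, a i j y = x) :
    (∀ (n : ℤ) (z : ∀ i : ℤ, M i (n + 1 - i)), {i | z i ≠ 0}.Finite →
      D (n + 1) z = 0 →
      ∃ w : ∀ i : ℤ, M i (n - i), {i | w i ≠ 0}.Finite ∧
        ∀ i : ℤ, i ≠ 0 → z i = D n w i) ∧
    (∀ (n : ℤ) (x : M 0 (n + 1 - (0 : ℤ))),
      a 0 (n + 1 - (0 : ℤ)) x = 0 → b 0 (n + 1 - (0 : ℤ)) x = 0 →
      (∃ w : ∀ i : ℤ, M i (n - i), {i | w i ≠ 0}.Finite ∧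
        D n w 0 = x ∧ ∀ i : ℤ, i ≠ 0 → D n w i = 0) →
      ∃ y : M 0 (n - (0 : ℤ)), a 0 (n - (0 : ℤ)) y = 0 ∧
        cast (congrArg (M 0) (by ring : n - (0 : ℤ) + 1 = n + 1 - (0 : ℤ)))
          (b 0 (n - (0 : ℤ)) y) = x) ∧
    (∀ (j : ℤ) (x : M 0 (j + 1)), a 0 (j + 1) x = 0 → b 0 (j + 1) x = 0 →
      ∃ y : M 0 j, a 0 j y = 0 ∧ b 0 j y = x) ∧
    (∀ (x n : ℤ), n + 1 ≠ x →
      ∀ z : ∀ i : ℤ, M i (n + 1 - i), (∀ i : ℤ, n + 1 - i < x → z i = 0) →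
        D (n + 1) z = 0 →
        ∃ w : ∀ i : ℤ, M i (n - i), (∀ i : ℤ, n - i < x → w i = 0) ∧ D n w = z) := by
  have hD' : ∀ (n : ℤ) (z : ∀ i : ℤ, M i (n - i)) (i : ℤ),
      D n z i = tr M rfl (by ring) (b i (n - i) (z i))
        + tr M (by ring) (by ring) (a (i - 1) (n - (i - 1)) (z (i - 1))) := hD
  have hD0 : ∀ (n i : ℤ), D n (0 : ∀ i : ℤ, M i (n - i)) i = 0 := by
    intro n i
    rw [hD']
    simp [tr_zero]
  have hDadd : ∀ (n : ℤ) (u v : ∀ i : ℤ, M i (n - i)) (i : ℤ),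
      D n (u + v) i = D n u i + D n v i := by
    intro n u v i
    simp only [hD', Pi.add_apply, map_add, tr_add]
    abel
  have hDsub : ∀ (n : ℤ) (u v : ∀ i : ℤ, M i (n - i)) (i : ℤ),
      D n (fun j => u j - v j) i = D n u i - D n v i := by
    intro n u v i
    simp only [hD', map_sub, tr_sub]
    abel
  have hDD : ∀ (n : ℤ) (w : ∀ i : ℤ, M i (n - i)) (i : ℤ),
      D (n + 1) (D n w) i = 0 := by
    intro n w i
    simp only [hD', map_add, b_tr, a_tr, tr_add, tr_tr, hb, ha, hab, tr_zero, tr_neg,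
      zero_add, add_zero, map_neg]
    exact add_neg_cancel _
  have hDcongr : ∀ (m n : ℤ) (h : m = n) (z : ∀ i : ℤ, M i (m - i)) (i : ℤ),
      D n (fun j => tr M rfl (by rw [h]) (z j)) i = tr M rfl (by rw [h]) (D m z i) := by
    intro m n h z i
    subst h
    rfl
  have SC1 : ∀ (N : ℕ) (n : ℤ) (z : ∀ i : ℤ, M i (n + 1 - i)),
      (∀ i : ℤ, (N : ℤ) < i → z i = 0) → D (n + 1) z = 0 →
      ∃ w : ∀ i : ℤ, M i (n - i), (∀ i : ℤ, i < 0 ∨ (N : ℤ) ≤ i → w i = 0) ∧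
        ∀ i : ℤ, i ≠ 0 → z i = D n w i := by
    intro N
    induction N with
    | zero =>
      intro n z hsupp hcyc
      refine ⟨0, fun i _ => rfl, fun i hi => ?_⟩
      rw [hD0]
      rcases lt_or_gt_of_ne hi with h | h
      · exact hquad _ _ h _
      · exact hsupp i (by exact_mod_cast h)
    | succ N IH =>
      intro n z hsupp hcyc
      have hz2 : z ((N : ℤ) + 2) = 0 := hsupp _ (by push_cast; omega)
      have htop : a ((N : ℤ) + 1) (n + 1 - ((N : ℤ) + 1)) (z ((N : ℤ) + 1)) = 0 := by
        have h0 : D (n + 1) z ((N : ℤ) + 2) = 0 := congrFun hcyc _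
        rw [hD' (n + 1) z ((N : ℤ) + 2), hz2,
          z_tr (M := M) z (show (N : ℤ) + 1 = (N : ℤ) + 2 - 1 by ring),
          a_tr, tr_tr, map_zero, tr_zero, zero_add] at h0
        exact (tr_eq_zero_iff _ _ _).mp h0
      obtain ⟨y, hy⟩ := hRows (N : ℤ) (n + 1 - ((N : ℤ) + 1)) (by omega) (z _) htop
      set v : ∀ i : ℤ, M i (n - i) := fun i =>
        if h : i = (N : ℤ) then tr M h.symm (by rw [h]; ring) y else 0 with hv
      have hvk : v (N : ℤ) = tr M rfl (by ring) y := dif_pos rfl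
      have hvne : ∀ i : ℤ, i ≠ (N : ℤ) → v i = 0 := fun i h => dif_neg h
      set z' : ∀ i : ℤ, M i (n + 1 - i) := fun i => z i - D n v i with hz'
      have hz'cyc : D (n + 1) z' = 0 := by
        funext i
        rw [hz', hDsub (n + 1) z (D n v) i, congrFun hcyc i, hDD]
        simp
      have hz'supp : ∀ i : ℤ, (N : ℤ) < i → z' i = 0 := by
        intro i hi
        rcases eq_or_lt_of_le (by omega : (N : ℤ) + 1 ≤ i) with h | h
        · subst h
          show z ((N : ℤ) + 1) - D n v ((N : ℤ) + 1) = 0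
          rw [hD' n v ((N : ℤ) + 1), hvne ((N : ℤ) + 1) (by omega),
            z_tr (M := M) v (show (N : ℤ) = (N : ℤ) + 1 - 1 by ring), hvk, tr_tr,
            a_tr, tr_tr, hy, map_zero, tr_zero, zero_add, tr_id, sub_self]
        · show z i - D n v i = 0
          rw [hD' n v i, hvne i (by omega), hvne (i - 1) (by omega), map_zero, map_zero,
            tr_zero, tr_zero, hsupp i (by push_cast; omega)]
          simp
      obtain ⟨w₀, hw₀supp, hw₀⟩ := IH n z' hz'supp hz'cyc
      refine ⟨w₀ + v, fun i hi => ?_, fun i hi => ?_⟩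
      · have h1 : w₀ i = 0 := hw₀supp i (by push_cast at hi; omega)
        have h2 : v i = 0 := hvne i (by push_cast at hi; omega)
        show w₀ i + v i = 0
        rw [h1, h2, add_zero]
      · rw [hDadd n w₀ v i, ← hw₀ i hi]
        show z i = z i - D n v i + D n v i
        abel
  have SC2 : ∀ (N : ℕ) (n : ℤ) (w : ∀ i : ℤ, M i (n - i)),
      (∀ i : ℤ, (N : ℤ) < i → w i = 0) → (∀ i : ℤ, i ≠ 0 → D n w i = 0) →
      ∃ w' : ∀ i : ℤ, M i (n - i), (∀ i : ℤ, i ≠ 0 → w' i = 0) ∧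
        ∀ i : ℤ, D n w' i = D n w i := by
    intro N
    induction N with
    | zero =>
      intro n w hsupp _
      refine ⟨w, fun i hi => ?_, fun i => rfl⟩
      rcases lt_or_gt_of_ne hi with h | h
      · exact hquad _ _ h _
      · exact hsupp i (by exact_mod_cast h)
    | succ N IH =>
      intro n w hsupp hDconc
      have htop : a ((N : ℤ) + 1) (n - ((N : ℤ) + 1)) (w ((N : ℤ) + 1)) = 0 := by
        have h0 : D n w ((N : ℤ) + 2) = 0 := hDconc _ (by omega)
        rw [hD' n w ((N : ℤ) + 2), hsupp ((N : ℤ) + 2) (by push_cast; omega),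
          z_tr (M := M) w (show (N : ℤ) + 1 = (N : ℤ) + 2 - 1 by ring),
          a_tr, tr_tr, map_zero, tr_zero, zero_add] at h0
        exact (tr_eq_zero_iff _ _ _).mp h0
      obtain ⟨y, hy⟩ := hRows (N : ℤ) (n - ((N : ℤ) + 1)) (by omega) (w _) htop
      set v : ∀ i : ℤ, M i (n - 1 - i) := fun i =>
        if h : i = (N : ℤ) then tr M h.symm (by rw [h]; ring) y else 0 with hv
      have hvk : v (N : ℤ) = tr M rfl (by ring) y := dif_pos rfl
      have hvne : ∀ i : ℤ, i ≠ (N : ℤ) → v i = 0 := fun i h => dif_neg h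
      set Dv : ∀ i : ℤ, M i (n - i) := fun i => tr M rfl (by ring) (D (n - 1) v i) with hDv
      have hDDv : ∀ i : ℤ, D n Dv i = 0 := by
        intro i
        rw [hDv, hDcongr (n - 1 + 1) n (by ring) (D (n - 1) v) i, hDD]
        exact tr_zero _ _
      set w₁ : ∀ i : ℤ, M i (n - i) := fun i => w i - Dv i with hw₁
      have hw₁D : ∀ i : ℤ, D n w₁ i = D n w i := by
        intro i
        rw [hw₁, hDsub n w Dv i, hDDv, sub_zero]
      have hw₁supp : ∀ i : ℤ, (N : ℤ) < i → w₁ i = 0 := by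
        intro i hi
        rcases eq_or_lt_of_le (by omega : (N : ℤ) + 1 ≤ i) with h | h
        · subst h
          show w ((N : ℤ) + 1) - Dv ((N : ℤ) + 1) = 0
          have hDveq : Dv ((N : ℤ) + 1) = w ((N : ℤ) + 1) := by
            show tr M rfl _ (D (n - 1) v ((N : ℤ) + 1)) = w ((N : ℤ) + 1)
            rw [hD' (n - 1) v ((N : ℤ) + 1), hvne ((N : ℤ) + 1) (by omega),
              z_tr (M := M) v (show (N : ℤ) = (N : ℤ) + 1 - 1 by ring), hvk, tr_tr,
              a_tr, tr_tr, hy, map_zero, tr_zero, zero_add, tr_tr, tr_id]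
          rw [hDveq, sub_self]
        · show w i - Dv i = 0
          have h1 : w i = 0 := hsupp i (by push_cast; omega)
          have h2 : Dv i = 0 := by
            show tr M rfl _ (D (n - 1) v i) = 0
            rw [hD' (n - 1) v i, hvne i (by omega), hvne (i - 1) (by omega)]
            simp [tr_zero]
          rw [h1, h2, sub_zero]
      obtain ⟨w', hw'conc, hw'D⟩ :=
        IH n w₁ hw₁supp (fun i hi => by rw [hw₁D i]; exact hDconc i hi)
      exact ⟨w', hw'conc, fun i => (hw'D i).trans (hw₁D i)⟩
  -- bound for finite sets
  have hbound : ∀ S : Set ℤ, S.Finite → ∃ N : ℕ, ∀ i : ℤ, (N : ℤ) < i → i ∉ S := by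
    intro S hfin
    obtain ⟨B, hB⟩ := hfin.bddAbove
    refine ⟨B.toNat, fun i hi hiS => ?_⟩
    have h1 : i ≤ B := hB hiS
    have h2 : B ≤ (B.toNat : ℤ) := Int.self_le_toNat B
    omega
  have KEY : ∀ (n : ℤ) (w : ∀ i : ℤ, M i (n - i)), {i | w i ≠ 0}.Finite →
      (∀ i : ℤ, i ≠ 0 → D n w i = 0) →
      ∃ y : M 0 (n - 0), a 0 (n - 0) y = 0 ∧
        tr M rfl (by ring) (b 0 (n - 0) y) = D n w 0 := by
    intro n w hfin hconc
    obtain ⟨N, hN⟩ := hbound _ hfin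
    have hsupp : ∀ i : ℤ, (N : ℤ) < i → w i = 0 := fun i hi => of_not_not (hN i hi)
    obtain ⟨w', hconc', hDeq⟩ := SC2 N n w hsupp hconc
    refine ⟨w' 0, ?_, ?_⟩
    · have h1 : D n w' 1 = 0 := (hDeq 1).trans (hconc 1 one_ne_zero)
      rw [hD' n w' 1, hconc' 1 one_ne_zero,
        z_tr (M := M) w' (show (0:ℤ) = 1 - 1 by ring), a_tr, tr_tr,
        map_zero, tr_zero, zero_add] at h1
      exact (tr_eq_zero_iff _ _ _).mp h1
    · have h0 : D n w' 0 = D n w 0 := hDeq 0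
      rw [hD' n w' 0, hconc' (0 - 1) (by omega), map_zero, tr_zero, add_zero] at h0
      exact h0
  -- Part 3 : exactness of J
  have p3 : ∀ (j : ℤ) (x : M 0 (j + 1)), a 0 (j + 1) x = 0 → b 0 (j + 1) x = 0 →
      ∃ y : M 0 j, a 0 j y = 0 ∧ b 0 j y = x := by
    intro j x hax hbx
    set z : ∀ i : ℤ, M i (j + 1 - i) := fun i =>
      if h : i = 0 then tr M h.symm (by rw [h]; ring) x else 0 with hzdef
    have hz0 : z 0 = tr M rfl (by ring) x := dif_pos rfl
    have hzne : ∀ i : ℤ, i ≠ 0 → z i = 0 := fun i h => dif_neg h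
    have hzfin : {i | z i ≠ 0}.Finite := by
      refine (Set.finite_singleton 0).subset fun i hi => ?_
      simp only [Set.mem_setOf_eq] at hi
      simp only [Set.mem_singleton_iff]
      by_contra hne
      exact hi (hzne i hne)
    have hzcyc : D (j + 1) z = 0 := by
      funext i
      rcases eq_or_ne i 0 with rfl | hi0
      · rw [hD' (j + 1) z 0, hz0, hzne (0 - 1) (by omega), b_tr, hbx, tr_zero]
        simp [tr_zero]
      rcases eq_or_ne i 1 with rfl | hi1
      · rw [hD' (j + 1) z 1, hzne 1 one_ne_zero,
          z_tr (M := M) z (show (0:ℤ) = 1 - 1 by ring), hz0, tr_tr, a_tr, hax, tr_zero]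
        simp [tr_zero]
      · rw [hD' (j + 1) z i, hzne i hi0, hzne (i - 1) (by omega)]
        simp [tr_zero]
    obtain ⟨w, hwfin, hwD⟩ := hTot j z hzfin hzcyc
    obtain ⟨y, hya, hyb⟩ := KEY j w hwfin (fun i hi => by rw [hwD]; exact hzne i hi)
    refine ⟨tr M rfl (by ring : j - 0 = j) y, ?_, ?_⟩
    · rw [a_tr, hya, tr_zero]
    · rw [b_tr]
      have h1 : tr M rfl (by ring : j - 0 + 1 = j + 1 - 0) (b 0 (j - 0) y)
          = tr M rfl (by ring : j + 1 = j + 1 - 0) x :=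
        hyb.trans ((congrFun hwD 0).trans hz0)
      have h2 := congrArg (tr M (rfl : (0:ℤ) = 0) (by ring : j + 1 - 0 = j + 1)) h1
      rw [tr_tr, tr_tr, tr_id] at h2
      exact h2
  refine ⟨?_, ?_, p3, ?_⟩
  · -- Part 1
    intro n z hfin hcyc
    obtain ⟨N, hN⟩ := hbound _ hfin
    obtain ⟨w, hwsupp, hw⟩ := SC1 N n z (fun i hi => of_not_not (hN i hi)) hcyc
    refine ⟨w, (Set.finite_Icc 0 (N : ℤ)).subset fun i hi => ?_, hw⟩
    simp only [Set.mem_setOf_eq] at hi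
    refine Set.mem_Icc.mpr ⟨?_, ?_⟩ <;> by_contra hc <;> exact hi (hwsupp i (by omega))
  · -- Part 2
    rintro n x hax hbx ⟨w, hwfin, hw0, hwne⟩
    obtain ⟨y, h1, h2⟩ := KEY n w hwfin hwne
    exact ⟨y, h1, h2.trans hw0⟩
  · -- Part 4
    intro x n hne z hsupp hcyc
    rcases lt_or_gt_of_ne hne with hlt | hgt
    · refine ⟨0, fun i _ => rfl, ?_⟩
      funext i
      rw [hD0]
      symm
      rcases lt_or_ge i 0 with h | h
      · exact hquad _ _ h _
      · exact hsupp i (by omega)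
    · set N : ℕ := (n + 1 - x).toNat with hNdef
      have hNval : (N : ℤ) = n + 1 - x := Int.toNat_of_nonneg (by omega)
      obtain ⟨w, hwsupp, hw⟩ := SC1 N n z (fun i hi => hsupp i (by omega)) hcyc
      set z' : ∀ i : ℤ, M i (n + 1 - i) := fun i => z i - D n w i with hz'
      have hz'ne : ∀ i : ℤ, i ≠ 0 → z' i = 0 := fun i hi => by
        show z i - D n w i = 0
        rw [← hw i hi, sub_self]
      have hb0 : b 0 (n + 1 - 0) (z' 0) = 0 := by
        have h0 : D (n + 1) z' 0 = 0 := by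
          rw [hz', hDsub (n + 1) z (D n w) 0, congrFun hcyc 0, hDD]
          simp
        rw [hD' (n + 1) z' 0, hz'ne (0 - 1) (by omega), map_zero, tr_zero, add_zero] at h0
        exact (tr_eq_zero_iff _ _ _).mp h0
      have ha0 : a 0 (n + 1 - 0) (z' 0) = 0 := by
        have h1 : D (n + 1) z' 1 = 0 := by
          rw [hz', hDsub (n + 1) z (D n w) 1, congrFun hcyc 1, hDD]
          simp
        rw [hD' (n + 1) z' 1, hz'ne 1 one_ne_zero,
          z_tr (M := M) z' (show (0:ℤ) = 1 - 1 by ring), a_tr, tr_tr,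
          map_zero, tr_zero, zero_add] at h1
        exact (tr_eq_zero_iff _ _ _).mp h1
      set x0 : M 0 (n + 1) := tr M rfl (by ring) (z' 0) with hx0
      have hax0 : a 0 (n + 1) x0 = 0 := by rw [hx0, a_tr, ha0, tr_zero]
      have hbx0 : b 0 (n + 1) x0 = 0 := by rw [hx0, b_tr, hb0, tr_zero]
      obtain ⟨y, hya, hyb⟩ := p3 n x0 hax0 hbx0
      set w' : ∀ i : ℤ, M i (n - i) := fun i =>
        if h : i = 0 then tr M h.symm (by rw [h]; ring) y else 0 with hw'def
      have hw'0 : w' 0 = tr M rfl (by ring) y := dif_pos rfl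
      have hw'ne : ∀ i : ℤ, i ≠ 0 → w' i = 0 := fun i h => dif_neg h
      have hDw' : ∀ i : ℤ, D n w' i = z' i := by
        intro i
        rcases eq_or_ne i 0 with rfl | hi0
        · rw [hD' n w' 0, hw'0, hw'ne (0 - 1) (by omega), map_zero, tr_zero, add_zero,
            b_tr, hyb, hx0, tr_tr, tr_tr, tr_id]
        rcases eq_or_ne i 1 with rfl | hi1
        · rw [hD' n w' 1, hw'ne 1 one_ne_zero,
            z_tr (M := M) w' (show (0:ℤ) = 1 - 1 by ring), hw'0, tr_tr, a_tr, hya,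
            hz'ne 1 one_ne_zero]
          simp [tr_zero]
        · rw [hD' n w' i, hw'ne i hi0, hw'ne (i - 1) (by omega), hz'ne i hi0]
          simp [tr_zero]
      refine ⟨w + w', fun i hi => ?_, ?_⟩
      · have h1 : w i = 0 := hwsupp i (by omega)
        have h2 : w' i = 0 := hw'ne i (by omega)
        show w i + w' i = 0
        rw [h1, h2, add_zero]
      · funext i
        rw [hDadd n w w' i, hDw' i]
        show D n w i + (z i - D n w i) = z i
        abel
end
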